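/- f_n(1/n) → −∞ as n → ∞. In particular there exists N such that for every n ≥ N one has f_n(1/n) < 0, and hence (since f_n(0) = 1 and f_n is continuous) for every n ≥ N there exists θ ∈ (0, 1/n) with f_n(θ) = 0. -/
import Mathlib

noncomputable def f (n : ℕ) (θ : ℝ) : ℝ :=
  (1 + θ)^(2*n - 2) - 2^(n-1) * θ^2 * (1 + θ^2)^(n-2) - 2^(2*n - 3) * θ^(n-2)

open Filter Real

lemma f_cont (n : ℕ) : Continuous (f n) := by
  unfold f; fun_prop

lemma f_zero (n : ℕ) (hn : 3 ≤ n) : f n 0 = 1 := by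
  have h : n - 2 ≠ 0 := by omega
  simp [f, zero_pow h]

lemma f_le (n : ℕ) (hn : 1 ≤ n) :
    f n (1 / (n : ℝ)) ≤ Real.exp 2 - 2^(n-1) / (n : ℝ)^2 := by
  have hn0 : (0:ℝ) < n := by exact_mod_cast hn
  have h1 : (1 + 1/(n:ℝ))^(2*n-2) ≤ Real.exp 2 := by
    calc (1 + 1/(n:ℝ))^(2*n-2) ≤ (Real.exp (1/n))^(2*n-2) := by
          apply pow_le_pow_left₀ (by positivity)
          have := Real.add_one_le_exp (1/(n:ℝ))
          linarith
      _ = Real.exp (((2*n-2 : ℕ) : ℝ) * (1/n)) := (Real.exp_nat_mul _ _).symm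
      _ ≤ Real.exp 2 := by
          apply Real.exp_le_exp.mpr
          rw [mul_one_div, div_le_iff₀ hn0]
          have : ((2*n-2 : ℕ) : ℝ) ≤ 2 * n := by
            have : (2*n-2 : ℕ) ≤ 2*n := by omega
            exact_mod_cast this
          nlinarith
  have h2 : (2:ℝ)^(n-1) / (n:ℝ)^2 ≤ 2^(n-1) * (1/(n:ℝ))^2 * (1 + (1/(n:ℝ))^2)^(n-2) := by
    have hge : (1:ℝ) ≤ (1 + (1/(n:ℝ))^2)^(n-2) := one_le_pow₀ (le_add_of_nonneg_right (by positivity))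
    have hpos : (0:ℝ) < 2^(n-1) * (1/(n:ℝ))^2 := by positivity
    have := mul_le_mul_of_nonneg_left hge hpos.le
    rw [mul_one] at this
    calc (2:ℝ)^(n-1) / (n:ℝ)^2 = 2^(n-1) * (1/(n:ℝ))^2 := by field_simp
      _ ≤ _ := this
  have h3 : (0:ℝ) ≤ 2^(2*n-3) * (1/(n:ℝ))^(n-2) := by positivity
  unfold f
  linarith

lemma tendsto_part :
    Filter.Tendsto (fun n : ℕ => f n (1 / (n : ℝ))) Filter.atTop Filter.atBot := by
  have hA : Tendsto (fun n : ℕ => (n:ℝ)^2 / 2^n) atTop (nhds 0) :=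
    tendsto_pow_const_div_const_pow_of_one_lt 2 (by norm_num)
  have hB : Tendsto (fun n : ℕ => (2:ℝ)^n / (n:ℝ)^2) atTop atTop := by
    have h1 : Tendsto (fun n : ℕ => (n:ℝ)^2 / 2^n) atTop (nhdsWithin 0 (Set.Ioi 0)) := by
      apply tendsto_nhdsWithin_of_tendsto_nhds_of_eventually_within _ hA
      filter_upwards [eventually_ge_atTop 1] with n hn
      have hn0 : (0:ℝ) < n := by exact_mod_cast hn
      exact Set.mem_Ioi.mpr (by positivity)
    have := h1.inv_tendsto_nhdsGT_zero
    refine this.congr fun n => ?_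
    simp [Pi.inv_apply, one_div, inv_div]
  have hC : Tendsto (fun n : ℕ => (2:ℝ)^(n-1) / (n:ℝ)^2) atTop atTop := by
    have := hB.atTop_div_const (show (0:ℝ) < 2 by norm_num)
    apply this.congr'
    filter_upwards [eventually_ge_atTop 1] with n hn
    have : (2:ℝ)^(n-1) = 2^n / 2 := by
      rw [eq_div_iff (by norm_num), ← pow_succ]
      congr 1; omega
    rw [this]; ring
  have hD : Tendsto (fun n : ℕ => Real.exp 2 - (2:ℝ)^(n-1) / (n:ℝ)^2) atTop atBot := by
    have := tendsto_atBot_add_const_left atTop (Real.exp 2) (tendsto_neg_atTop_atBot.comp hC)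
    exact this.congr fun n => by simp [Function.comp]; ring
  apply tendsto_atBot_mono' atTop _ hD
  filter_upwards [eventually_ge_atTop 1] with n hn
  exact f_le n hn

/-- `f_n(1/n) → -∞` as `n → ∞`; in particular there is an `N` such that for all
`n ≥ N`, `f_n(1/n) < 0`, and hence there exists `θ ∈ (0, 1/n)` with `f_n(θ) = 0`. -/
theorem f_at_inv_n_tendsto_atBot :
    Filter.Tendsto (fun n : ℕ => f n (1 / (n : ℝ))) Filter.atTop Filter.atBot ∧
    ∃ N : ℕ, ∀ n : ℕ, N ≤ n →
      f n (1 / (n : ℝ)) < 0 ∧ ∃ θ ∈ Set.Ioo (0 : ℝ) (1 / (n : ℝ)), f n θ = 0 := by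
  refine ⟨tendsto_part, ?_⟩
  have hev : ∀ᶠ n : ℕ in atTop, f n (1 / (n : ℝ)) < 0 :=
    tendsto_part.eventually (eventually_lt_atBot 0)
  obtain ⟨N0, hN0⟩ := eventually_atTop.mp hev
  refine ⟨max N0 3, fun n hn => ?_⟩
  have hn3 : 3 ≤ n := le_trans (le_max_right _ _) hn
  have hneg : f n (1 / (n : ℝ)) < 0 := hN0 n (le_trans (le_max_left _ _) hn)
  refine ⟨hneg, ?_⟩
  have hn0 : (0:ℝ) < 1 / n := by
    have : (0:ℝ) < n := by exact_mod_cast (by omega : 0 < n)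
    positivity
  have hsub := intermediate_value_Ioo' hn0.le ((f_cont n).continuousOn)
  have hmem : (0:ℝ) ∈ Set.Ioo (f n (1 / (n:ℝ))) (f n 0) := by
    constructor
    · exact hneg
    · rw [f_zero n hn3]; norm_num
  obtain ⟨θ, hθ, hfθ⟩ := hsub hmem
  exact ⟨θ, hθ, hfθ⟩
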